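/- If a random unit vector h is chosen uniformly from the unit sphere in ℝ^d and x, y ∈ ℝ^d are two distinct points, then the probability that the hyperplane through the origin with normal h separates x and y (i.e., sign(⟨x,h⟩) ≠ sign(⟨y,h⟩)) equals θ/π, where θ is the angle between x and y. -/

import Mathlib

/-!
The separating set is a cone, so its normalized surface measure is the fraction of the unit ball
it fills, and up to a null set it is the cone where `⟪x, v⟫ * ⟪y, v⟫ < 0`. For the unit vectors
`a`, `b` along `x`, `y`, the vectors `a + b` and `b - a` are orthogonal, and
`2 ⟪a, v⟫ ⟪b, v⟫ = (1 + cos θ) ⟪u, v⟫ ^ 2 - (1 - cos θ) ⟪w, v⟫ ^ 2` for their normalizations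
`u`, `w`. So the cone is a double wedge in the `(u, w)`-plane times its orthogonal complement.
Slicing the ball by planes parallel to the `(u, w)`-plane leaves discs, and in polar coordinates
the wedge meets each of them in the angles with `cos 2φ + cos θ < 0`, of measure `2θ` out of `2π`.
-/

open MeasureTheory Metric Set Real InnerProductGeometry
open scoped ENNReal Pointwise

theorem Real.sign_mul_of_pos {c : ℝ} (hc : 0 < c) (t : ℝ) : Real.sign (c * t) = Real.sign t := by
  rcases lt_trichotomy t 0 with ht | rfl | ht
  · rw [sign_of_neg ht, sign_of_neg (mul_neg_of_pos_of_neg hc ht)]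
  · rw [mul_zero]
  · rw [sign_of_pos ht, sign_of_pos (mul_pos hc ht)]

theorem Real.sign_ne_sign_iff_mul_neg {a b : ℝ} (ha : a ≠ 0) (hb : b ≠ 0) :
    Real.sign a ≠ Real.sign b ↔ a * b < 0 := by
  rcases ha.lt_or_gt with ha | ha <;> rcases hb.lt_or_gt with hb | hb
  · simp [sign_of_neg ha, sign_of_neg hb, (mul_pos_of_neg_of_neg ha hb).le]
  · simp [sign_of_neg ha, sign_of_pos hb, mul_neg_of_neg_of_pos ha hb]; norm_num
  · simp [sign_of_pos ha, sign_of_neg hb, mul_neg_of_pos_of_neg ha hb]; norm_num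
  · simp [sign_of_pos ha, sign_of_pos hb, (mul_pos ha hb).le]

theorem Real.measurable_sign : Measurable Real.sign :=
  Measurable.ite (measurableSet_lt measurable_id measurable_const) measurable_const <|
    Measurable.ite (measurableSet_lt measurable_const measurable_id) measurable_const
      measurable_const

section Cone

variable {E : Type*} [NormedAddCommGroup E] [NormedSpace ℝ E]

theorem norm_inv_norm_smul {x : E} (hx : x ≠ 0) : ‖‖x‖⁻¹ • x‖ = 1 := by
  rw [norm_smul, norm_inv, norm_norm, inv_mul_cancel₀ (norm_ne_zero_iff.2 hx)]

theorem Ioo_smul_image_coe_sphere_of_cone {C : Set E}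
    (hC : ∀ c : ℝ, 0 < c → ∀ v, c • v ∈ C ↔ v ∈ C) (h0 : (0 : E) ∉ C) :
    Ioo (0 : ℝ) 1 • ((↑) '' {h : sphere (0 : E) 1 | (h : E) ∈ C}) = ball 0 1 ∩ C := by
  ext v
  simp only [mem_smul, mem_image, mem_ofPred_eq, mem_inter_iff, mem_ball_zero_iff]
  constructor
  · rintro ⟨c, hc, _, ⟨h, hhC, rfl⟩, rfl⟩
    have hh : ‖(h : E)‖ = 1 := mem_sphere_zero_iff_norm.1 h.2
    exact ⟨by rw [norm_smul, hh, mul_one, Real.norm_of_nonneg hc.1.le]; exact hc.2,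
      (hC c hc.1 h).2 hhC⟩
  · rintro ⟨hv, hvC⟩
    have hv0 : v ≠ 0 := by rintro rfl; exact h0 hvC
    have hn : 0 < ‖v‖ := norm_pos_iff.2 hv0
    exact ⟨‖v‖, ⟨hn, hv⟩, _, ⟨⟨‖v‖⁻¹ • v, mem_sphere_zero_iff_norm.2 (norm_inv_norm_smul hv0)⟩,
      (hC _ (inv_pos.2 hn) v).2 hvC, rfl⟩, smul_inv_smul₀ hn.ne' v⟩

variable [FiniteDimensional ℝ E] [MeasurableSpace E] [BorelSpace E] [Nontrivial E]

theorem MeasureTheory.Measure.toSphere_normalized_apply_cone (μ : Measure E)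
    [μ.IsAddHaarMeasure] {C : Set E} (hCm : MeasurableSet C)
    (hC : ∀ c : ℝ, 0 < c → ∀ v, c • v ∈ C ↔ v ∈ C) (h0 : (0 : E) ∉ C) :
    ((μ.toSphere univ)⁻¹ • μ.toSphere) {h | (h : E) ∈ C} = μ (ball 0 1 ∩ C) / μ (ball 0 1) := by
  rw [Measure.smul_apply, smul_eq_mul,
    μ.toSphere_apply' (s := {h | (h : E) ∈ C}) (measurable_subtype_coe hCm), toSphere_apply_univ,
    Ioo_smul_image_coe_sphere_of_cone hC h0, ← ENNReal.div_eq_inv_mul,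
    ENNReal.mul_div_mul_left _ _ (by simp [Module.finrank_pos.ne']) (ENNReal.natCast_ne_top _)]

end Cone

theorem lintegral_Ioi_indicator_sq_lt_ofReal (R : ℝ) :
    ∫⁻ r in Ioi 0, {r : ℝ | r ^ 2 < R}.indicator ENNReal.ofReal r = ENNReal.ofReal (R / 2) := by
  rw [lintegral_indicator (measurableSet_lt (by fun_prop) measurable_const),
    Measure.restrict_restrict (measurableSet_lt (by fun_prop) measurable_const)]
  rcases le_or_gt R 0 with hR | hR
  · have hempty : {r : ℝ | r ^ 2 < R} ∩ Ioi 0 = ∅ :=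
      eq_empty_of_forall_notMem fun r ⟨hr, _⟩ => (sq_nonneg r).not_gt (hr.trans_le hR)
    rw [hempty, Measure.restrict_empty, lintegral_zero_measure,
      ENNReal.ofReal_of_nonpos (by linarith)]
  have hIoo : {r : ℝ | r ^ 2 < R} ∩ Ioi 0 = Ioo 0 √R := by
    ext r
    simp only [mem_inter_iff, mem_ofPred_eq, mem_Ioi, mem_Ioo]
    exact ⟨fun ⟨h, h0⟩ => ⟨h0, Real.lt_sqrt_of_sq_lt h⟩,
      fun ⟨h0, h⟩ => ⟨(Real.lt_sqrt h0.le).1 h, h0⟩⟩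
  have hint : IntegrableOn (fun r : ℝ => r) (Ioo 0 √R) :=
    continuous_id.integrableOn_Icc.mono_set Ioo_subset_Icc_self
  have hnonneg : 0 ≤ᵐ[volume.restrict (Ioo 0 √R)] fun r : ℝ => r :=
    (ae_restrict_iff' measurableSet_Ioo).2 (.of_forall fun r hr => hr.1.le)
  rw [hIoo, ← ofReal_integral_eq_lintegral_ofReal hint hnonneg,
    ← integral_Ioc_eq_integral_Ioo, ← intervalIntegral.integral_of_le (sqrt_nonneg R),
    integral_id, sq_sqrt hR.le]
  ring_nf

theorem volume_sector {W : Set (ℝ × ℝ)} {A : Set ℝ} (hW : MeasurableSet W) (hA : MeasurableSet A)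
    (hWA : ∀ r > 0, ∀ φ, (r * cos φ, r * sin φ) ∈ W ↔ φ ∈ A) (R : ℝ) :
    volume {p ∈ W | p.1 ^ 2 + p.2 ^ 2 < R} = ENNReal.ofReal (R / 2) * volume (A ∩ Ioo (-π) π) := by
  set D := {r : ℝ | r ^ 2 < R}
  have hD : MeasurableSet D := measurableSet_lt (measurable_id.pow_const 2) measurable_const
  have hS : MeasurableSet {p ∈ W | p.1 ^ 2 + p.2 ^ 2 < R} :=
    hW.inter (measurableSet_lt (f := fun p : ℝ × ℝ => p.1 ^ 2 + p.2 ^ 2) (by fun_prop)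
      measurable_const)
  calc volume {p ∈ W | p.1 ^ 2 + p.2 ^ 2 < R}
      = ∫⁻ p in polarCoord.target,
          ENNReal.ofReal p.1 • {p ∈ W | p.1 ^ 2 + p.2 ^ 2 < R}.indicator 1 (polarCoord.symm p) := by
        rw [lintegral_comp_polarCoord_symm, lintegral_indicator_one hS]
    _ = ∫⁻ p in Ioi 0 ×ˢ Ioo (-π) π, D.indicator ENNReal.ofReal p.1 * A.indicator 1 p.2 := by
        rw [polarCoord_target]
        refine setLIntegral_congr_fun (measurableSet_Ioi.prod measurableSet_Ioo) fun p hp => ?_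
        have hnorm : (p.1 * cos p.2) ^ 2 + (p.1 * sin p.2) ^ 2 = p.1 ^ 2 := by
          linear_combination p.1 ^ 2 * cos_sq_add_sin_sq p.2
        simp only [polarCoord_symm_apply, D, indicator, mem_ofPred_eq, hWA p.1 hp.1 p.2, hnorm,
          Pi.one_apply, smul_eq_mul]
        split_ifs <;> simp_all
    _ = ENNReal.ofReal (R / 2) * volume (A ∩ Ioo (-π) π) := by
        rw [Measure.volume_eq_prod, ← Measure.prod_restrict,
          lintegral_prod_mul (ENNReal.measurable_ofReal.indicator hD).aemeasurable
            (measurable_one.indicator hA).aemeasurable,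
          lintegral_Ioi_indicator_sq_lt_ofReal, lintegral_indicator_one hA,
          Measure.restrict_apply hA]

theorem cos_two_mul_add_cos_neg_iff {θ φ : ℝ} (h0 : 0 ≤ θ) (hπ : θ ≤ π) (hφ : |φ| ≤ π) :
    cos (2 * φ) + cos θ < 0 ↔ |2 * |φ| - π| < θ := by
  have hcos : cos (2 * φ) = -cos |2 * |φ| - π| := by
    rw [cos_abs, cos_sub_pi, neg_neg, ← abs_two, ← abs_mul, cos_abs, abs_two]
  have hmem : |2 * |φ| - π| ∈ Icc 0 π :=
    ⟨abs_nonneg _, abs_le.2 ⟨by linarith [abs_nonneg φ], by linarith⟩⟩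
  rw [hcos, ← strictAntiOn_cos.lt_iff_gt ⟨h0, hπ⟩ hmem]
  constructor <;> intro h <;> linarith

theorem volume_cos_two_mul_add_cos_neg {θ : ℝ} (h0 : 0 ≤ θ) (hπ : θ ≤ π) :
    volume ({φ | cos (2 * φ) + cos θ < 0} ∩ Ioo (-π) π) = ENNReal.ofReal (2 * θ) := by
  have hset : {φ | cos (2 * φ) + cos θ < 0} ∩ Ioo (-π) π
      = Ioo (-(π + θ) / 2) (-(π - θ) / 2) ∪ Ioo ((π - θ) / 2) ((π + θ) / 2) := by
    ext φ
    simp only [mem_inter_iff, mem_ofPred_eq, mem_Ioo, mem_union]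
    constructor
    · rintro ⟨h, hφ⟩
      rw [cos_two_mul_add_cos_neg_iff h0 hπ (abs_le.2 ⟨hφ.1.le, hφ.2.le⟩), abs_lt] at h
      rcases le_total 0 φ with hs | hs
      · rw [abs_of_nonneg hs] at h; right; constructor <;> linarith
      · rw [abs_of_nonpos hs] at h; left; constructor <;> linarith
    · intro h
      have hφ : -π < φ ∧ φ < π := by rcases h with h | h <;> constructor <;> linarith
      refine ⟨?_, hφ⟩
      rw [cos_two_mul_add_cos_neg_iff h0 hπ (abs_le.2 ⟨hφ.1.le, hφ.2.le⟩), abs_lt]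
      rcases h with h | h
      · rw [abs_of_nonpos (by linarith)]; constructor <;> linarith
      · rw [abs_of_nonneg (by linarith)]; constructor <;> linarith
  have hdisj : Disjoint (Ioo (-(π + θ) / 2) (-(π - θ) / 2)) (Ioo ((π - θ) / 2) ((π + θ) / 2)) :=
    Ioo_disjoint_Ioo.2 (min_le_left _ _ |>.trans (le_max_of_le_right (by linarith)))
  rw [hset, measure_union hdisj measurableSet_Ioo, volume_Ioo, volume_Ioo,
    ← ENNReal.ofReal_add (by linarith) (by linarith)]
  ring_nf

section InnerProductSpace

variable {E : Type*} [NormedAddCommGroup E] [InnerProductSpace ℝ E]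

theorem orthonormal_vecCons_two {u w : E} (hu : ‖u‖ = 1) (hw : ‖w‖ = 1)
    (huw : inner ℝ u w = (0 : ℝ)) : Orthonormal ℝ ![u, w] := by
  rw [orthonormal_iff_ite]
  intro i j
  fin_cases i <;> fin_cases j <;> simp [hu, hw, huw, real_inner_comm u w]

theorem exists_orthonormal_two_mul_inner_mul_inner {a b : E} (ha : ‖a‖ = 1) (hb : ‖b‖ = 1)
    (h1 : -1 < inner ℝ a b) (h2 : inner ℝ a b < (1 : ℝ)) :
    ∃ u w : E, Orthonormal ℝ ![u, w] ∧ ∀ v, 2 * (inner ℝ a v * inner ℝ b v) =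
      (1 + inner ℝ a b) * inner ℝ u v ^ 2 - (1 - inner ℝ a b) * inner ℝ w v ^ 2 := by
  have hP : ‖a + b‖ ^ 2 = 2 * (1 + inner ℝ a b) := by
    rw [norm_add_sq_real, ha, hb]; ring
  have hQ : ‖b - a‖ ^ 2 = 2 * (1 - inner ℝ a b) := by
    rw [norm_sub_sq_real, ha, hb, real_inner_comm]; ring
  have hP0 : a + b ≠ 0 := fun h => by rw [h, norm_zero] at hP; linarith
  have hQ0 : b - a ≠ 0 := fun h => by rw [h, norm_zero] at hQ; linarith
  have hPQ : inner ℝ (a + b) (b - a) = (0 : ℝ) := by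
    rw [inner_add_left, inner_sub_right, inner_sub_right, real_inner_self_eq_norm_sq,
      real_inner_self_eq_norm_sq, ha, hb, real_inner_comm]
    ring
  have h1' : 1 + inner ℝ a b ≠ (0 : ℝ) := by linarith
  have h2' : 1 - inner ℝ a b ≠ (0 : ℝ) := by linarith
  refine ⟨‖a + b‖⁻¹ • (a + b), ‖b - a‖⁻¹ • (b - a), orthonormal_vecCons_two
    (norm_inv_norm_smul hP0) (norm_inv_norm_smul hQ0) ?_, fun v => ?_⟩
  · rw [real_inner_smul_left, real_inner_smul_right, hPQ, mul_zero, mul_zero]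
  · simp only [real_inner_smul_left, inner_add_left, inner_sub_left, mul_pow, inv_pow, hP, hQ]
    field_simp
    ring

variable [FiniteDimensional ℝ E]

theorem Orthonormal.exists_orthonormalBasis_sum_inl {u w : E} (huw : Orthonormal ℝ ![u, w])
    {m : ℕ} (hm : Module.finrank ℝ E = m + 2) :
    ∃ b : OrthonormalBasis (Fin 2 ⊕ Fin m) ℝ E, ∀ i, b (.inl i) = ![u, w] i := by
  have hrestrict :
      Orthonormal ℝ ((range Sum.inl).domRestrict (Sum.elim ![u, w] (0 : Fin m → E))) := by
    convert huw.comp _ (Equiv.ofInjective _ Sum.inl_injective).symm.injective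
    ext ⟨_, i, rfl⟩
    simp
  obtain ⟨b, hb⟩ := hrestrict.exists_orthonormalBasis_extension_of_card_eq
    (by simp [hm, add_comm])
  exact ⟨b, fun i => hb _ (mem_range_self i)⟩

variable [MeasurableSpace E] [BorelSpace E]

theorem Orthonormal.exists_measurePreserving_inner {u w : E} (huw : Orthonormal ℝ ![u, w])
    {m : ℕ} (hm : Module.finrank ℝ E = m + 2) :
    ∃ Φ : E → (ℝ × ℝ) × (Fin m → ℝ), MeasurePreserving Φ ∧ ∀ v,
      (Φ v).1 = (inner ℝ u v, inner ℝ w v) ∧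
      ‖v‖ ^ 2 = (Φ v).1.1 ^ 2 + (Φ v).1.2 ^ 2 + ∑ i, (Φ v).2 i ^ 2 := by
  obtain ⟨b, hb⟩ := huw.exists_orthonormalBasis_sum_inl hm
  refine ⟨fun v => (MeasurableEquiv.finTwoArrow ((b.repr v).ofLp ∘ .inl), (b.repr v).ofLp ∘ .inr),
    ?_, fun v => ⟨?_, ?_⟩⟩
  · exact ((volume_preserving_finTwoArrow ℝ).prod (.id volume)).comp
      ((measurePreserving_sumPiEquivProdPi _).comp
        ((EuclideanSpace.volume_preserving_symm_measurableEquiv_toLp _).comp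
          b.measurePreserving_repr))
  · simp [MeasurableEquiv.finTwoArrow, b.repr_apply_apply, hb]
  · rw [← b.repr.norm_map, EuclideanSpace.real_norm_sq_eq, Fintype.sum_sum_type,
      Fin.sum_univ_two]
    simp [MeasurableEquiv.finTwoArrow]

theorem Orthonormal.volume_ball_inter_inner_mem {u w : E} (huw : Orthonormal ℝ ![u, w])
    {m : ℕ} (hm : Module.finrank ℝ E = m + 2) {W : Set (ℝ × ℝ)} (hW : MeasurableSet W) :
    volume (ball (0 : E) 1 ∩ {v | (inner ℝ u v, inner ℝ w v) ∈ W})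
      = ∫⁻ z : Fin m → ℝ, volume {p ∈ W | p.1 ^ 2 + p.2 ^ 2 < 1 - ∑ i, z i ^ 2} := by
  obtain ⟨Φ, hΦ, hΦv⟩ := huw.exists_measurePreserving_inner hm
  set T := {q : (ℝ × ℝ) × (Fin m → ℝ) | q.1 ∈ W ∧ q.1.1 ^ 2 + q.1.2 ^ 2 < 1 - ∑ i, q.2 i ^ 2}
  have hT : MeasurableSet T := (measurable_fst hW).inter <| measurableSet_lt
    (f := fun q : (ℝ × ℝ) × (Fin m → ℝ) => q.1.1 ^ 2 + q.1.2 ^ 2) (by fun_prop) (by fun_prop)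
  have hpre : ball (0 : E) 1 ∩ {v | (inner ℝ u v, inner ℝ w v) ∈ W} = Φ ⁻¹' T := by
    ext v
    obtain ⟨h1, h2⟩ := hΦv v
    simp only [mem_inter_iff, mem_ball_zero_iff, mem_ofPred_eq, mem_preimage, T, h1,
      ← sq_lt_one_iff₀ (norm_nonneg v), h2]
    constructor
    · rintro ⟨hv, hvW⟩
      exact ⟨hvW, by linarith⟩
    · rintro ⟨hvW, hv⟩
      exact ⟨by linarith, hvW⟩
  rw [hpre, hΦ.measure_preimage hT.nullMeasurableSet, Measure.volume_eq_prod,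
    Measure.prod_apply_symm hT]
  rfl

theorem Orthonormal.volume_ball_inter_wedge {u w : E} (huw : Orthonormal ℝ ![u, w]) {θ : ℝ}
    (h0 : 0 ≤ θ) (hπ : θ ≤ π) :
    volume (ball (0 : E) 1 ∩
        {v | (1 + cos θ) * inner ℝ u v ^ 2 < (1 - cos θ) * inner ℝ w v ^ 2})
      = ENNReal.ofReal (θ / π) * volume (ball (0 : E) 1) := by
  obtain ⟨m, hm⟩ : ∃ m, Module.finrank ℝ E = m + 2 := by
    have := huw.linearIndependent.fintype_card_le_finrank
    exact ⟨Module.finrank ℝ E - 2, by simp at this; omega⟩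
  set K := ∫⁻ z : Fin m → ℝ, ENNReal.ofReal ((1 - ∑ i, z i ^ 2) / 2)
  have hcone : ∀ {W : Set (ℝ × ℝ)} {A : Set ℝ}, MeasurableSet W → MeasurableSet A →
      (∀ r > 0, ∀ φ, (r * cos φ, r * sin φ) ∈ W ↔ φ ∈ A) →
      volume (ball (0 : E) 1 ∩ {v | (inner ℝ u v, inner ℝ w v) ∈ W})
        = K * volume (A ∩ Ioo (-π) π) := by
    intro W A hW hA hWA
    simp_rw [huw.volume_ball_inter_inner_mem hm hW, volume_sector hW hA hWA]
    exact lintegral_mul_const _ (by fun_prop)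
  have hball : volume (ball (0 : E) 1) = K * ENNReal.ofReal (2 * π) := by
    simpa [volume_Ioo, two_mul] using
      hcone (W := univ) (A := univ) .univ .univ (fun _ _ _ => Iff.rfl)
  have hwedge := hcone (W := {p | (1 + cos θ) * p.1 ^ 2 < (1 - cos θ) * p.2 ^ 2})
    (A := {φ | cos (2 * φ) + cos θ < 0}) (measurableSet_lt (by fun_prop) (by fun_prop))
    (measurableSet_lt (by fun_prop) measurable_const) fun r hr φ => by
      have hpolar : (1 + cos θ) * (r * cos φ) ^ 2 - (1 - cos θ) * (r * sin φ) ^ 2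
          = r ^ 2 * (cos (2 * φ) + cos θ) := by
        rw [cos_two_mul]
        linear_combination (-(r ^ 2) * (1 - cos θ)) * cos_sq_add_sin_sq φ
      rw [mem_ofPred_eq, mem_ofPred_eq, ← sub_neg, hpolar, ← smul_eq_mul,
        smul_neg_iff_of_pos_left (pow_pos hr 2)]
  refine hwedge.trans ?_
  rw [volume_cos_two_mul_add_cos_neg h0 hπ, hball, mul_left_comm,
    ← ENNReal.ofReal_mul (div_nonneg h0 pi_pos.le)]
  congr 2
  field_simp

theorem ae_inner_ne_zero {x : E} (hx : x ≠ 0) : ∀ᵐ v : E, inner ℝ x v ≠ (0 : ℝ) := by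
  refine ae_iff.2 ?_
  simp only [not_not]
  exact Measure.addHaar_submodule volume (LinearMap.ker (innerₛₗ ℝ x)) fun h =>
    hx (inner_self_eq_zero.1 (LinearMap.mem_ker.1 (h ▸ Submodule.mem_top)))

theorem volume_ball_inter_inner_mul_inner_neg {x y : E} (hx : x ≠ 0) (hy : y ≠ 0) :
    volume (ball (0 : E) 1 ∩ {v | inner ℝ x v * inner ℝ y v < (0 : ℝ)})
      = ENNReal.ofReal (angle x y / π) * volume (ball (0 : E) 1) := by
  rcases (angle_nonneg x y).eq_or_lt with h0 | h0
  · obtain ⟨-, r, hr, rfl⟩ := angle_eq_zero_iff.1 h0.symm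
    have hempty : {v | inner ℝ x v * inner ℝ (r • x) v < (0 : ℝ)} = ∅ :=
      eq_empty_of_forall_notMem fun v hv => by
        rw [mem_ofPred_eq, real_inner_smul_left] at hv
        nlinarith [sq_nonneg (inner ℝ x v)]
    rw [← h0, zero_div, ENNReal.ofReal_zero, zero_mul, hempty, inter_empty, measure_empty]
  rcases (angle_le_pi x y).eq_or_lt with hπ | hπ
  · obtain ⟨-, r, hr, rfl⟩ := angle_eq_pi_iff.1 hπ
    rw [hπ, div_self pi_ne_zero, ENNReal.ofReal_one, one_mul]
    refine measure_congr (Filter.eventuallyEq_set.2 ?_)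
    filter_upwards [ae_inner_ne_zero hx] with v hv
    refine and_iff_left ?_
    have hsq : 0 < inner ℝ x v ^ 2 := by positivity
    rw [mem_ofPred_eq, real_inner_smul_left]
    nlinarith
  set a := ‖x‖⁻¹ • x
  set b := ‖y‖⁻¹ • y
  have hab : inner ℝ a b = cos (angle x y) := by
    rw [cos_angle, real_inner_smul_left, real_inner_smul_right]
    field_simp
  obtain ⟨u, w, huw, hdecomp⟩ := exists_orthonormal_two_mul_inner_mul_inner
    (norm_inv_norm_smul hx) (norm_inv_norm_smul hy)
    (by rw [hab, ← cos_pi]; exact cos_lt_cos_of_nonneg_of_le_pi h0.le le_rfl hπ)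
    (by rw [hab, ← cos_zero]; exact cos_lt_cos_of_nonneg_of_le_pi le_rfl hπ.le h0)
  rw [← huw.volume_ball_inter_wedge h0.le hπ.le, ← hab]
  congr 2
  ext v
  have hxy : inner ℝ x v * inner ℝ y v = (‖x‖ * ‖y‖ / 2) * (2 * (inner ℝ a v * inner ℝ b v)) := by
    simp only [a, b, real_inner_smul_left]
    field_simp
  rw [mem_ofPred_eq, mem_ofPred_eq, hxy, ← smul_eq_mul,
    smul_neg_iff_of_pos_left (by positivity), hdecomp, sub_neg]

end InnerProductSpace

theorem random_hyperplane_separation_general {d : ℕ}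
    (x y : EuclideanSpace ℝ (Fin d)) (hx : x ≠ 0) (hy : y ≠ 0)
    (μ : Measure (sphere (0 : EuclideanSpace ℝ (Fin d)) 1))
    (hμ : μ = ((volume : Measure (EuclideanSpace ℝ (Fin d))).toSphere Set.univ)⁻¹ •
        (volume : Measure (EuclideanSpace ℝ (Fin d))).toSphere) :
    μ {h : sphere (0 : EuclideanSpace ℝ (Fin d)) 1 |
        Real.sign (inner ℝ x (h : EuclideanSpace ℝ (Fin d)) : ℝ) ≠
        Real.sign (inner ℝ y (h : EuclideanSpace ℝ (Fin d)) : ℝ)} =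
      ENNReal.ofReal (Real.arccos ((inner ℝ x y : ℝ) / (‖x‖ * ‖y‖)) / Real.pi) := by
  have : Nontrivial (EuclideanSpace ℝ (Fin d)) := ⟨⟨x, 0, hx⟩⟩
  set C := {v : EuclideanSpace ℝ (Fin d) | Real.sign (inner ℝ x v) ≠ Real.sign (inner ℝ y v)}
  have hCm : MeasurableSet C :=
    (measurableSet_eq_fun (Real.measurable_sign.comp (by fun_prop))
      (Real.measurable_sign.comp (by fun_prop))).compl
  have hC : ∀ c : ℝ, 0 < c → ∀ v, c • v ∈ C ↔ v ∈ C := fun c hc v => by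
    simp only [C, mem_ofPred_eq, real_inner_smul_right, Real.sign_mul_of_pos hc]
  have h0 : (0 : EuclideanSpace ℝ (Fin d)) ∉ C := by simp [C]
  have hae : (ball 0 1 ∩ C : Set (EuclideanSpace ℝ (Fin d))) =ᵐ[volume]
      (ball 0 1 ∩ {v | inner ℝ x v * inner ℝ y v < (0 : ℝ)} : Set (EuclideanSpace ℝ (Fin d))) := by
    refine Filter.eventuallyEq_set.2 ?_
    filter_upwards [ae_inner_ne_zero hx, ae_inner_ne_zero hy] with v hvx hvy
    exact and_congr_right fun _ => Real.sign_ne_sign_iff_mul_neg hvx hvy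
  rw [hμ]
  refine (Measure.toSphere_normalized_apply_cone volume hCm hC h0).trans ?_
  rw [measure_congr hae, volume_ball_inter_inner_mul_inner_neg hx hy,
    ENNReal.mul_div_cancel_right (measure_ball_pos volume 0 one_pos).ne' measure_ball_lt_top.ne]
  rfl

/-- If a random unit vector `h` is chosen uniformly from the unit sphere in `ℝ^d`
and `x, y` are two distinct nonzero points, then the probability that the hyperplane
through the origin with normal `h` separates `x` and `y`
(i.e. `sign ⟨x,h⟩ ≠ sign ⟨y,h⟩`) equals `θ/π`, where
`θ = arccos (⟨x,y⟩ / (‖x‖‖y‖))` is the angle between `x` and `y`. -/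
theorem random_hyperplane_separation {d : ℕ}
    (x y : EuclideanSpace ℝ (Fin d)) (hx : x ≠ 0) (hy : y ≠ 0) (hxy : x ≠ y)
    (μ : Measure (sphere (0 : EuclideanSpace ℝ (Fin d)) 1))
    (hμ : μ = ((volume : Measure (EuclideanSpace ℝ (Fin d))).toSphere Set.univ)⁻¹ •
        (volume : Measure (EuclideanSpace ℝ (Fin d))).toSphere) :
    μ {h : sphere (0 : EuclideanSpace ℝ (Fin d)) 1 |
        Real.sign (inner ℝ x (h : EuclideanSpace ℝ (Fin d)) : ℝ) ≠
        Real.sign (inner ℝ y (h : EuclideanSpace ℝ (Fin d)) : ℝ)} =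
      ENNReal.ofReal (Real.arccos ((inner ℝ x y : ℝ) / (‖x‖ * ‖y‖)) / Real.pi) :=
  random_hyperplane_separation_general x y hx hy μ hμ
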